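/- Let 𝒢 = (G_n,‖·‖_n)_{n∈ℕ} be a family of metric groups whose norms are all bounded by 1 and whose underlying family of groups (G_n) has the (⋆)-property, and let 𝒰 be a nonprincipal ultrafilter on ℕ. If the metric ultraproduct 𝒢*_met = (∏_n G_n)/ℰ is a simple (in particular nontrivial) group, then 𝒢*_met is metrically uniformly simple. -/

import Mathlib

open Filter Set Pointwise ENNReal

/-- `CN N g` : the set of all products of at most `N` conjugates of `g` and `g⁻¹`. -/
def CN {H : Type*} [Group H] (N : ℕ) (g : H) : Set H :=
  ⋃ m ≤ N, ({x | IsConj g x} ∪ {x | IsConj g⁻¹ x}) ^ m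

/-- A family of groups equipped with conjugation-invariant pseudo-norms with values in `[0,∞]`. -/
structure PMFamily where
  G : ℕ → Type
  grp : ∀ n, Group (G n)
  ν : ∀ n, G n → ℝ≥0∞
  norm_one : ∀ n, ν n 1 = 0
  norm_mul : ∀ n (g h : G n), ν n (g * h) ≤ ν n g + ν n h
  norm_inv : ∀ n (g : G n), ν n g⁻¹ = ν n g
  norm_conj : ∀ n (g h : G n), ν n (h * g * h⁻¹) = ν n g

attribute [instance] PMFamily.grp

namespace PMFamily

variable (𝒢 : PMFamily) (U : Ultrafilter ℕ)

/-- The subgroup of infinitesimal sequences. -/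
def E : Subgroup (∀ n, 𝒢.G n) where
  carrier := {g | ∀ ε : ℝ≥0∞, 0 < ε → {n | 𝒢.ν n (g n) < ε} ∈ U}
  one_mem' := by
    intro ε hε
    have h : {n | 𝒢.ν n ((1 : ∀ n, 𝒢.G n) n) < ε} = Set.univ := by
      ext n; simpa [𝒢.norm_one n] using hε
    show {n | 𝒢.ν n ((1 : ∀ n, 𝒢.G n) n) < ε} ∈ U
    rw [h]
    exact Filter.univ_mem
  mul_mem' := by
    intro g h hg hh ε hε
    have h2 : (0 : ℝ≥0∞) < ε / 2 := ENNReal.half_pos hε.ne'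
    have key : {n | 𝒢.ν n (g n) < ε / 2} ∩ {n | 𝒢.ν n (h n) < ε / 2} ⊆
        {n | 𝒢.ν n ((g * h) n) < ε} := by
      rintro n ⟨h1, h1'⟩
      simp only [Set.mem_setOf_eq] at h1 h1' ⊢
      calc 𝒢.ν n ((g * h) n) = 𝒢.ν n (g n * h n) := rfl
        _ ≤ 𝒢.ν n (g n) + 𝒢.ν n (h n) := 𝒢.norm_mul n _ _
        _ < ε / 2 + ε / 2 := ENNReal.add_lt_add h1 h1'
        _ = ε := ENNReal.add_halves ε
    exact Filter.mem_of_superset (Filter.inter_mem (hg _ h2) (hh _ h2)) key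
  inv_mem' := by
    intro g hg ε hε
    have h : {n | 𝒢.ν n (g⁻¹ n) < ε} = {n | 𝒢.ν n (g n) < ε} := by
      ext n; simp only [Set.mem_setOf_eq, Pi.inv_apply, 𝒢.norm_inv n]
    show {n | 𝒢.ν n (g⁻¹ n) < ε} ∈ U
    rw [h]
    exact hg ε hε

theorem mem_E {g : ∀ n, 𝒢.G n} :
    g ∈ 𝒢.E U ↔ ∀ ε : ℝ≥0∞, 0 < ε → {n | 𝒢.ν n (g n) < ε} ∈ U := Iff.rfl

instance normal_E : (𝒢.E U).Normal := by
  constructor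
  intro g hg h
  rw [mem_E] at hg ⊢
  intro ε hε
  have heq : {n | 𝒢.ν n ((h * g * h⁻¹) n) < ε} = {n | 𝒢.ν n (g n) < ε} := by
    ext n
    simp only [Set.mem_setOf_eq, Pi.mul_apply, Pi.inv_apply, 𝒢.norm_conj n]
  rw [heq]
  exact hg ε hε

/-- The metric ultraproduct. -/
abbrev Q := (∀ n, 𝒢.G n) ⧸ 𝒢.E U

/-- The limit of the norms along the ultrafilter, on the product group. -/
noncomputable def pnorm (g : ∀ n, 𝒢.G n) : ℝ≥0∞ :=
  Filter.limsup (fun n => 𝒢.ν n (g n)) U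

/-- The induced norm on the metric ultraproduct. -/
noncomputable def qnorm (x : 𝒢.Q U) : ℝ≥0∞ := 𝒢.pnorm U (Quotient.out x)

/-- The open ball of radius `ε` around the identity in the metric ultraproduct. -/
def ball (ε : ℝ≥0∞) : Set (𝒢.Q U) := {x | 𝒢.qnorm U x < ε}

/-- Metrically internal subsets of the metric ultraproduct. -/
def internalSet (Xn : ∀ n, Set (𝒢.G n)) : Set (𝒢.Q U) :=
  (QuotientGroup.mk : (∀ n, 𝒢.G n) → 𝒢.Q U) '' {g | ∀ n, g n ∈ Xn n}

/-- The finitary subgroup of the metric ultraproduct: classes of uniformly bounded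
sequences (equivalently, elements of finite norm). -/
def finSubgroup : Subgroup (𝒢.Q U) where
  carrier := {x | ∃ g : ∀ n, 𝒢.G n, QuotientGroup.mk g = x ∧
    ∃ C : ℝ≥0∞, C ≠ ⊤ ∧ ∀ n, 𝒢.ν n (g n) ≤ C}
  one_mem' := ⟨1, rfl, 0, by simp, fun n => by simp [𝒢.norm_one n]⟩
  mul_mem' := by
    rintro x y ⟨g, rfl, C, hC, hg⟩ ⟨h, rfl, D, hD, hh⟩
    refine ⟨g * h, rfl, C + D, ENNReal.add_ne_top.mpr ⟨hC, hD⟩, fun n => ?_⟩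
    exact le_trans (𝒢.norm_mul n (g n) (h n)) (add_le_add (hg n) (hh n))
  inv_mem' := by
    rintro x ⟨g, rfl, C, hC, hg⟩
    exact ⟨g⁻¹, rfl, C, hC, fun n => by rw [Pi.inv_apply, 𝒢.norm_inv n]; exact hg n⟩

end PMFamily

/-- `Ng g = min {n : C_n(g,G) = G}` (and `⊤` if there is no such `n`). -/
noncomputable def Ng {H : Type*} [Group H] (g : H) : ℕ∞ :=
  sInf {x : ℕ∞ | ∃ m : ℕ, x = m ∧ CN m g = Set.univ}

/-- The `(⋆)`-property for a family of groups. -/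
def StarProp (G : ℕ → Type) [∀ n, Group (G n)] : Prop :=
  (∃ N : ℕ, ∀ n, ∃ g : G n, CN N g = Set.univ) ∧
  (∀ k : ℕ, ∃ l : ℕ, ∀ n (g h : G n),
    (l : ℕ∞) ≤ Ng g → (l : ℕ∞) ≤ Ng h → (k : ℕ∞) ≤ Ng (g * h))

/-- The set `Z_𝒰` of sequences whose coordinates need more and more conjugates
to normally generate, along `𝒰`. -/
def ZU (G : ℕ → Type) [∀ n, Group (G n)] (U : Ultrafilter ℕ) : Set (∀ n, G n) :=
  {g | ∀ k : ℕ, {n | (k : ℕ∞) < Ng (g n)} ∈ U}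

/-!
Call a sequence `(g_n)` thick when `N(g_n, G_n) → ∞` along `𝒰`. By condition (2) of the
`(⋆)`-property, thick sequences form a normal subgroup `Z` of `∏ G_n`. If `g_n` generates `G_n`
with `l` conjugates then every element of `G_n` has norm at most `l ‖g_n‖`, so in a nontrivial
ultraproduct every infinitesimal sequence is thick. Hence every lift of an element of the image
of `Z` in the ultraproduct is thick, and the image is a proper normal subgroup, since the sequence
given by condition (1) is not thick. By simplicity it is trivial: no thick sequence has norm
bounded away from `0`. A diagonal argument over the nonprincipal ultrafilter turns this into a
uniform bound: for `r > 0` there is `K` with `N(g_n, G_n) ≤ K` along `𝒰` whenever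
`‖(g_n)‖ > r`, and Łoś's theorem for products of conjugates gives `C_K(g) = 𝒢*_met`.
-/

open Topology

section Conjugates

variable {H : Type*} [Group H]

def conjugatesOfSymm (g : H) : Set H := conjugatesOf g ∪ conjugatesOf g⁻¹

lemma CN_eq (N : ℕ) (g : H) : CN N g = ⋃ m ≤ N, conjugatesOfSymm g ^ m := rfl

lemma mem_CN {N : ℕ} {g x : H} : x ∈ CN N g ↔ ∃ m ≤ N, x ∈ conjugatesOfSymm g ^ m := by
  simp only [CN_eq, mem_iUnion, exists_prop]

lemma CN_mono {M N : ℕ} (h : M ≤ N) (g : H) : CN M g ⊆ CN N g := fun _ hx =>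
  let ⟨m, hm, hx⟩ := mem_CN.1 hx
  mem_CN.2 ⟨m, hm.trans h, hx⟩

lemma conjugatesOfSymm_inv (g : H) : conjugatesOfSymm g⁻¹ = conjugatesOfSymm g := by
  rw [conjugatesOfSymm, conjugatesOfSymm, inv_inv, union_comm]

lemma conjugatesOfSymm_conj (g c : H) :
    conjugatesOfSymm (c * g * c⁻¹) = conjugatesOfSymm g := by
  rw [conjugatesOfSymm, conjugatesOfSymm, conj_inv,
    ← isConj_iff_conjugatesOf_eq.1 (isConj_iff.2 ⟨c, rfl⟩),
    ← isConj_iff_conjugatesOf_eq.1 (isConj_iff.2 ⟨c, rfl⟩)]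

lemma conjugatesOfSymm_one : conjugatesOfSymm (1 : H) = 1 := by
  ext x
  simp [conjugatesOfSymm, conjugatesOf]

lemma CN_one (N : ℕ) : CN N (1 : H) = 1 := by
  ext
  simpa [mem_CN, conjugatesOfSymm_one] using fun _ => ⟨0, N.zero_le⟩

lemma Ng_le_iff {g : H} {m : ℕ} : Ng g ≤ m ↔ CN m g = univ := by
  refine ⟨fun h => ?_, fun h => sInf_le ⟨m, rfl, h⟩⟩
  obtain ⟨_, ⟨k, rfl, hk⟩, hlt⟩ :=
    sInf_lt_iff.1 (h.trans_lt (ENat.natCast_lt_natCast.2 m.lt_succ_self))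
  exact univ_subset_iff.1 (hk ▸ CN_mono (Nat.lt_succ_iff.1 (ENat.natCast_lt_natCast.1 hlt)) g)

lemma lt_Ng_iff {g : H} {m : ℕ} : (m : ℕ∞) < Ng g ↔ CN m g ≠ univ := by
  rw [← not_le, Ng_le_iff]

lemma Ng_inv (g : H) : Ng g⁻¹ = Ng g := by
  simp only [Ng, CN_eq, conjugatesOfSymm_inv]

lemma Ng_conj (g c : H) : Ng (c * g * c⁻¹) = Ng g := by
  simp only [Ng, CN_eq, conjugatesOfSymm_conj]

lemma lt_Ng_one [Nontrivial H] (m : ℕ) : (m : ℕ∞) < Ng (1 : H) := by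
  rw [lt_Ng_iff, CN_one]
  obtain ⟨x, hx⟩ := exists_ne (1 : H)
  exact fun h => hx (h ▸ mem_univ x : x ∈ (1 : Set H))

end Conjugates

section Thick

variable {G : ℕ → Type} [∀ n, Group (G n)] {U : Ultrafilter ℕ}

def zuSubgroup (hT : ∀ᶠ n in U, Nontrivial (G n))
    (hmul : ∀ k : ℕ, ∃ l : ℕ, ∀ n (g h : G n),
      (l : ℕ∞) ≤ Ng g → (l : ℕ∞) ≤ Ng h → (k : ℕ∞) ≤ Ng (g * h)) :
    Subgroup (∀ n, G n) where
  carrier := ZU G U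
  one_mem' k := hT.mono fun _ _ => lt_Ng_one k
  mul_mem' {z z'} hz hz' k := by
    obtain ⟨l, hl⟩ := hmul (k + 1)
    filter_upwards [hz l, hz' l] with n h h'
    exact (ENat.natCast_lt_natCast.2 k.lt_succ_self).trans_le (hl n _ _ h.le h'.le)
  inv_mem' {z} hz k := by
    simpa only [Pi.inv_apply, Ng_inv] using hz k

lemma zuSubgroup_normal (hT : ∀ᶠ n in U, Nontrivial (G n))
    (hmul : ∀ k : ℕ, ∃ l : ℕ, ∀ n (g h : G n),
      (l : ℕ∞) ≤ Ng g → (l : ℕ∞) ≤ Ng h → (k : ℕ∞) ≤ Ng (g * h)) :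
    (zuSubgroup hT hmul).Normal :=
  ⟨fun z hz c k => by simpa only [Pi.mul_apply, Pi.inv_apply, Ng_conj] using hz k⟩

end Thick

lemma exists_tendsto_atTop_eventually_mem {l : Filter ℕ} (hl : l ≤ atTop) {A : ℕ → Set ℕ}
    (hA : ∀ k, A k ∈ l) : ∃ φ : ℕ → ℕ, Tendsto φ l atTop ∧ ∀ᶠ n in l, n ∈ A (φ n) := by
  classical
  let P (n k : ℕ) : Prop := ∀ j ∈ Iic k, n ∈ A j
  have hP : ∀ k, ∀ᶠ n in l, k ≤ n ∧ P n k := fun k =>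
    ((eventually_ge_atTop k).filter_mono hl).and
      ((finite_Iic k).eventually_all.2 fun j _ => hA j)
  refine ⟨fun n => Nat.findGreatest (P n) n,
    tendsto_atTop.2 fun k => (hP k).mono fun n hn => Nat.le_findGreatest hn.1 hn.2,
    (hP 0).mono fun n hn => Nat.findGreatest_spec hn.1 hn.2 _ (mem_Iic.2 le_rfl)⟩

namespace PMFamily

variable (𝒢 : PMFamily) (U : Ultrafilter ℕ)

lemma mem_E_iff_tendsto {g : ∀ n, 𝒢.G n} :
    g ∈ 𝒢.E U ↔ Tendsto (fun n => 𝒢.ν n (g n)) U (𝓝 0) := by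
  simp [tendsto_order, mem_E, Filter.Eventually]

lemma mk_eq_mk_of_eventuallyEq {a b : ∀ n, 𝒢.G n} (h : ∀ᶠ n in U, a n = b n) :
    (a : 𝒢.Q U) = b :=
  QuotientGroup.eq.2 fun ε hε => h.mono fun n hn => by simpa [hn, 𝒢.norm_one] using hε

lemma mk_mem_conjugatesOf {g b : ∀ n, 𝒢.G n} (h : ∀ᶠ n in U, b n ∈ conjugatesOf (g n)) :
    (b : 𝒢.Q U) ∈ conjugatesOf (g : 𝒢.Q U) := by
  obtain ⟨c, hc⟩ := skolem.1 (h.mono fun n hn => isConj_iff.1 hn)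
  exact isConj_iff.2 ⟨c, 𝒢.mk_eq_mk_of_eventuallyEq U hc⟩

lemma mk_mem_conjugatesOfSymm {g b : ∀ n, 𝒢.G n}
    (h : ∀ᶠ n in U, b n ∈ conjugatesOfSymm (g n)) :
    (b : 𝒢.Q U) ∈ conjugatesOfSymm (g : 𝒢.Q U) := by
  rcases Ultrafilter.eventually_or.1 h with h | h
  · exact Or.inl (𝒢.mk_mem_conjugatesOf U h)
  · exact Or.inr (𝒢.mk_mem_conjugatesOf U (g := g⁻¹) h)

lemma mk_mem_pow {g : ∀ n, 𝒢.G n} : ∀ {k : ℕ} {y : ∀ n, 𝒢.G n},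
    (∀ᶠ n in U, y n ∈ conjugatesOfSymm (g n) ^ k) →
      (y : 𝒢.Q U) ∈ conjugatesOfSymm (g : 𝒢.Q U) ^ k
  | 0, _, h => by
    simp only [pow_zero, Set.mem_one] at h ⊢
    exact (𝒢.mk_eq_mk_of_eventuallyEq U (b := 1) h).trans (QuotientGroup.mk_one _)
  | k + 1, _, h => by
    simp only [pow_succ, Set.mem_mul] at h ⊢
    obtain ⟨a, ha⟩ := skolem.1 h
    obtain ⟨b, hb⟩ := skolem.1 (ha.mono fun _ hn => hn.2)
    exact ⟨a, mk_mem_pow (ha.mono fun _ hn => hn.1), b,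
      𝒢.mk_mem_conjugatesOfSymm U (hb.mono fun _ hn => hn.1),
      𝒢.mk_eq_mk_of_eventuallyEq U (hb.mono fun _ hn => hn.2)⟩

lemma CN_mk_eq_univ {K : ℕ} {g : ∀ n, 𝒢.G n} (h : ∀ᶠ n in U, CN K (g n) = univ) :
    CN K (g : 𝒢.Q U) = univ := by
  refine eq_univ_of_forall fun x => ?_
  induction x using QuotientGroup.induction_on with | H y => ?_
  have hy : (⋃ m ∈ Iic K, {n | y n ∈ conjugatesOfSymm (g n) ^ m}) ∈ U :=
    mem_of_superset h fun n hn => by simpa using mem_CN.1 (hn ▸ mem_univ (y n))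
  obtain ⟨m, hm, hmy⟩ := (Ultrafilter.finite_biUnion_mem_iff (finite_Iic K)).1 hy
  exact mem_CN.2 ⟨m, hm, 𝒢.mk_mem_pow U hmy⟩

lemma eventually_nontrivial [Nontrivial (𝒢.Q U)] : ∀ᶠ n in U, Nontrivial (𝒢.G n) := by
  by_contra h
  have hsub : ∀ᶠ n in U, Subsingleton (𝒢.G n) := by
    simpa [not_nontrivial_iff_subsingleton] using Ultrafilter.eventually_not.2 h
  obtain ⟨x, hx⟩ := exists_ne (1 : 𝒢.Q U)
  induction x using QuotientGroup.induction_on with | H g => ?_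
  exact hx (𝒢.mk_eq_mk_of_eventuallyEq U (hsub.mono fun n _ => Subsingleton.elim (g n) 1))

lemma eventually_lt_of_lt_pnorm {g : ∀ n, 𝒢.G n} {a : ℝ≥0∞} (h : a < 𝒢.pnorm U g) :
    ∀ᶠ n in U, a < 𝒢.ν n (g n) :=
  Ultrafilter.frequently_iff_eventually.1 (frequently_lt_of_lt_limsup (by isBoundedDefault) h)

lemma norm_eq_of_mem_conjugatesOfSymm {n : ℕ} {g x : 𝒢.G n} (hx : x ∈ conjugatesOfSymm g) :
    𝒢.ν n x = 𝒢.ν n g := by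
  rcases hx with hx | hx <;> obtain ⟨c, rfl⟩ := isConj_iff.1 hx
  · exact 𝒢.norm_conj n g c
  · rw [𝒢.norm_conj, 𝒢.norm_inv]

lemma norm_le_of_mem_pow {n : ℕ} {g : 𝒢.G n} :
    ∀ {m : ℕ} {x : 𝒢.G n}, x ∈ conjugatesOfSymm g ^ m → 𝒢.ν n x ≤ m * 𝒢.ν n g
  | 0, x, hx => by
    rw [pow_zero, Set.mem_one] at hx
    simp [hx, 𝒢.norm_one]
  | m + 1, _, hx => by
    obtain ⟨a, ha, b, hb, rfl⟩ := Set.mem_mul.1 (pow_succ (conjugatesOfSymm g) m ▸ hx)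
    calc 𝒢.ν n (a * b) ≤ 𝒢.ν n a + 𝒢.ν n b := 𝒢.norm_mul n a b
      _ ≤ m * 𝒢.ν n g + 𝒢.ν n g :=
        add_le_add (norm_le_of_mem_pow ha) (𝒢.norm_eq_of_mem_conjugatesOfSymm hb).le
      _ = (m + 1 : ℕ) * 𝒢.ν n g := by push_cast; ring

lemma norm_le_of_mem_CN {n m : ℕ} {g x : 𝒢.G n} (hx : x ∈ CN m g) :
    𝒢.ν n x ≤ m * 𝒢.ν n g := by
  obtain ⟨j, hj, hx⟩ := mem_CN.1 hx
  exact (𝒢.norm_le_of_mem_pow hx).trans (mul_le_mul_left (Nat.cast_le.2 hj) _)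

lemma E_subset_ZU [Nontrivial (𝒢.Q U)] : (𝒢.E U : Set (∀ n, 𝒢.G n)) ⊆ ZU 𝒢.G U := by
  intro e he l
  by_contra hl
  have hgen : ∀ᶠ n in U, CN l (e n) = univ := by
    simpa [lt_Ng_iff] using Ultrafilter.eventually_not.2 hl
  obtain ⟨x, hx⟩ := exists_ne (1 : 𝒢.Q U)
  induction x using QuotientGroup.induction_on with | H g => ?_
  refine hx ((QuotientGroup.eq_one_iff g).2 ((𝒢.mem_E_iff_tendsto U).2 ?_))
  have hlim : Tendsto (fun n => (l : ℝ≥0∞) * 𝒢.ν n (e n)) U (𝓝 0) := by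
    simpa using ENNReal.Tendsto.const_mul ((𝒢.mem_E_iff_tendsto U).1 he)
      (Or.inr (natCast_ne_top l))
  refine tendsto_of_tendsto_of_tendsto_of_le_of_le' tendsto_const_nhds hlim
    (.of_forall fun _ => zero_le) ?_
  filter_upwards [hgen] with n hn
  exact 𝒢.norm_le_of_mem_CN (hn ▸ mem_univ (g n))

lemma map_zuSubgroup_ne_top [Nontrivial (𝒢.Q U)] (hstar : StarProp 𝒢.G) :
    (zuSubgroup (𝒢.eventually_nontrivial U) hstar.2).map (QuotientGroup.mk' (𝒢.E U)) ≠ ⊤ := by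
  set Z := zuSubgroup (𝒢.eventually_nontrivial U) hstar.2
  obtain ⟨N, hN⟩ := hstar.1
  choose w hw using hN
  intro htop
  obtain ⟨z, hz, hzw⟩ := (Subgroup.eq_top_iff' _).1 htop (w : 𝒢.Q U)
  have hwZ : w ∈ Z := by
    simpa using Z.mul_mem hz (𝒢.E_subset_ZU U (QuotientGroup.eq.1 hzw))
  obtain ⟨n, hn⟩ := Eventually.exists (hwZ N)
  exact lt_Ng_iff.1 hn (hw n)

theorem exists_CN_eq_univ_of_lt_pnorm (hU : (U : Filter ℕ) ≤ cofinite) (hstar : StarProp 𝒢.G)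
    [IsSimpleGroup (𝒢.Q U)] {r : ℝ≥0∞} (hr : 0 < r) :
    ∃ K : ℕ, ∀ g : ∀ n, 𝒢.G n, r < 𝒢.pnorm U g → ∀ᶠ n in U, CN K (g n) = univ := by
  by_contra! h
  choose g hgr hgK using h
  obtain ⟨φ, hφ, hdiag⟩ := exists_tendsto_atTop_eventually_mem (Nat.cofinite_eq_atTop ▸ hU)
    (A := fun K => {n | r < 𝒢.ν n (g K n) ∧ (K : ℕ∞) < Ng (g K n)}) fun K =>
    (𝒢.eventually_lt_of_lt_pnorm U (hgr K)).and
      (by simpa only [ne_eq, lt_Ng_iff] using hgK K)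
  set h : ∀ n, 𝒢.G n := fun n => g (φ n) n
  have hZ : h ∈ ZU 𝒢.G U := fun k => by
    filter_upwards [hdiag, tendsto_atTop.1 hφ k] with n hn hk
    exact (ENat.natCast_le_natCast.2 hk).trans_lt hn.2
  have hne : (h : 𝒢.Q U) ≠ 1 := fun h1 => by
    obtain ⟨n, hn, hn'⟩ :=
      (Eventually.and ((QuotientGroup.eq_one_iff h).1 h1 r hr) hdiag).exists
    exact lt_asymm hn hn'.1
  have hnormal := (zuSubgroup_normal (𝒢.eventually_nontrivial U) hstar.2).map _
    (QuotientGroup.mk'_surjective (𝒢.E U))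
  refine 𝒢.map_zuSubgroup_ne_top U hstar
    ((IsSimpleGroup.eq_bot_or_eq_top_of_normal _ hnormal).resolve_left fun hbot => hne ?_)
  exact Subgroup.mem_bot.1 (hbot ▸ Subgroup.mem_map_of_mem _ hZ)

end PMFamily

theorem statement17_general (𝒢 : PMFamily)
    (U : Ultrafilter ℕ) (hU : (U : Filter ℕ) ≤ Filter.cofinite)
    (hstar : StarProp 𝒢.G)
    (hsimple : IsSimpleGroup (𝒢.Q U)) :
    ∀ t r : ℝ, 0 < r → r < t → ∃ N : ℕ, ∀ g : 𝒢.Q U,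
      ENNReal.ofReal r < 𝒢.qnorm U g → 𝒢.qnorm U g ≤ ENNReal.ofReal t →
        ∀ x : 𝒢.Q U, 𝒢.qnorm U x < ENNReal.ofReal t → x ∈ CN N g := by
  intro t r hr _
  obtain ⟨K, hK⟩ := 𝒢.exists_CN_eq_univ_of_lt_pnorm U hU hstar (ENNReal.ofReal_pos.2 hr)
  refine ⟨K, fun g hg _ x _ => ?_⟩
  rw [← QuotientGroup.out_eq' g, 𝒢.CN_mk_eq_univ U (hK _ hg)]
  exact mem_univ x

/-- If the norms of the family are bounded by `1`, the underlying family
of groups has the `(⋆)`-property, and the metric ultraproduct is a simple group, then the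
metric ultraproduct is metrically uniformly simple. -/
theorem statement17 (𝒢 : PMFamily)
    (hmetric : ∀ n (g : 𝒢.G n), 𝒢.ν n g = 0 ↔ g = 1)
    (hbdd : ∀ n (g : 𝒢.G n), 𝒢.ν n g ≤ 1)
    (U : Ultrafilter ℕ) (hU : (U : Filter ℕ) ≤ Filter.cofinite)
    (hstar : StarProp 𝒢.G)
    (hsimple : IsSimpleGroup (𝒢.Q U)) :
    ∀ t r : ℝ, 0 < r → r < t → ∃ N : ℕ, ∀ g : 𝒢.Q U,
      ENNReal.ofReal r < 𝒢.qnorm U g → 𝒢.qnorm U g ≤ ENNReal.ofReal t →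
        ∀ x : 𝒢.Q U, 𝒢.qnorm U x < ENNReal.ofReal t → x ∈ CN N g :=
  statement17_general 𝒢 U hU hstar hsimple
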